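/- Let p be a positive odd integer and define h_φ(t) = (1/p²) · sin²(pt/2)/sin²(t/2) (extended by continuity where sin(t/2) = 0). Then for every t ∈ ℝ, Σ_{k=0}^{p-1} h_φ(t + 2kπ/p) = 1; equivalently, for every t with sin((t+2kπ/p)/2) ≠ 0 for all k ∈ {0,…,p-1}, (1/p²) Σ_{k=0}^{p-1} sin²(pt/2)/sin²((t + 2kπ/p)/2) = 1. -/

import Mathlib

/- STATEMENT 17: for p a positive odd integer and
`h_φ(t) = (1/p²) sin²(pt/2)/sin²(t/2)` (extended by continuity, with value 1, at the
points where sin(t/2) = 0), one has `∑_{k=0}^{p-1} h_φ(t + 2kπ/p) = 1` for all t;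
equivalently, whenever sin((t+2kπ/p)/2) ≠ 0 for all k < p,
`(1/p²) ∑_{k<p} sin²(pt/2)/sin²((t+2kπ/p)/2) = 1`. -/

noncomputable section

/-- `h_φ(t) = (1/p²) sin²(pt/2)/sin²(t/2)`, extended by continuity (value 1, valid for
odd p) where `sin(t/2) = 0`. -/
def hphi (p : ℕ) (t : ℝ) : ℝ :=
  if Real.sin (t / 2) = 0 then 1
  else Real.sin (p * t / 2) ^ 2 / ((p : ℝ) ^ 2 * Real.sin (t / 2) ^ 2)

/- Write `S_p(z) = ∑_{j<p} e^{i(2j+1-p)z}` (`sinRatio p z`). Then `sin(pz) = sin z · S_p(z)` by a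
telescoping geometric sum, and at the zeros of `sin z` one has `S_p(z) = ±p`, so `h_φ(t) = S_p(t/2)²/p²`
everywhere, singular points included. Squaring, `S_p(z)² = ∑_{j,l<p} e^{2i(j+l+1-p)z}` with exponents
`|j+l+1-p| < p`; averaging over the shifts `z + kπ/p` multiplies `e^{2imz}` by a sum of `p`-th roots of
unity, which vanishes unless `m = 0`. Exactly `p` pairs `(j, l)` have `m = 0`, so
`∑_k S_p(z + kπ/p)² = p²`. -/

open Complex Finset
open scoped Real

def sinRatio (p : ℕ) (z : ℂ) : ℂ :=
  ∑ j ∈ range p, cexp ((2 * j + 1 - p) * z * I)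

theorem sin_nat_mul_eq_sin_mul_sinRatio (p : ℕ) (z : ℂ) :
    Complex.sin (p * z) = Complex.sin z * sinRatio p z := by
  set a := cexp (z * I)
  have ha : a ≠ 0 := Complex.exp_ne_zero _
  have hpow : ∀ n : ℕ, cexp (n * z * I) = a ^ n := fun n => by
    rw [mul_assoc, Complex.exp_nat_mul]
  have hterm : ∀ j : ℕ, cexp ((2 * j + 1 - p) * z * I) = a * (a ^ 2) ^ j / a ^ p := fun j => by
    rw [eq_div_iff (pow_ne_zero _ ha), ← hpow, ← pow_mul, ← pow_succ', ← hpow, ← Complex.exp_add]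
    push_cast
    ring_nf
  have hgeom := geom_sum_mul (a ^ 2) p
  simp only [← pow_mul] at hgeom
  have hsin : ∀ n : ℕ, Complex.sin (n * z) = ((a ^ n)⁻¹ - a ^ n) * I / 2 := fun n => by
    rw [Complex.sin, ← hpow, ← Complex.exp_neg]
    ring_nf
  have hsin1 := hsin 1
  simp only [Nat.cast_one, one_mul, pow_one] at hsin1
  simp only [sinRatio, hterm, ← sum_div, ← mul_sum, hsin, hsin1, ← pow_mul]
  field_simp
  linear_combination hgeom

theorem sinRatio_sq (p : ℕ) (z : ℂ) :
    sinRatio p z ^ 2 = ∑ j ∈ range p, ∑ l ∈ range p, cexp (2 * ((j + l + 1 - p : ℤ) * z) * I) := by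
  rw [sinRatio, sq, sum_mul_sum]
  refine sum_congr rfl fun j _ => sum_congr rfl fun l _ => ?_
  rw [← Complex.exp_add]
  push_cast
  ring_nf

theorem sinRatio_sq_int_mul_pi (p : ℕ) (n : ℤ) : sinRatio p (n * π) ^ 2 = p ^ 2 := by
  set m : ℤ := (1 - p) * n
  have hterm : ∀ j : ℕ, cexp ((2 * j + 1 - p) * (n * π) * I) = cexp (m * π * I) := fun j => by
    rw [show ((2 * j + 1 - p) * (n * π) * I : ℂ) = m * π * I + (j * n : ℤ) * (2 * π * I) by
        push_cast [m]; ring,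
      Complex.exp_add, Complex.exp_int_mul_two_pi_mul_I, mul_one]
  have hsq : cexp (m * π * I) ^ 2 = 1 := by
    rw [← Complex.exp_nat_mul, ← Complex.exp_int_mul_two_pi_mul_I m]
    push_cast
    ring_nf
  simp only [sinRatio, hterm, sum_const, card_range, nsmul_eq_mul, mul_pow, hsq, mul_one]

theorem sum_exp_int_mul_add_pi_div (p : ℕ) (m : ℤ) (hm : |m| < p) (z : ℂ) :
    ∑ k ∈ range p, cexp (2 * (m * (z + k * π / p)) * I) = if m = 0 then (p : ℂ) else 0 := by
  have hp : p ≠ 0 := by rintro rfl; simp at hm; linarith [abs_nonneg m]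
  set ζ := cexp (2 * π * I / p)
  have hζ : IsPrimitiveRoot ζ p := Complex.isPrimitiveRoot_exp p hp
  have hterm : ∀ k : ℕ, cexp (2 * (m * (z + k * π / p)) * I) = cexp (2 * m * z * I) * (ζ ^ m) ^ k :=
    fun k => by
      rw [← zpow_natCast, ← zpow_mul, ← Complex.exp_int_mul, ← Complex.exp_add]
      congr 1
      push_cast
      field_simp
  simp only [hterm, ← mul_sum]
  split_ifs with h0
  · simp [h0]
  · have hne : ζ ^ m ≠ 1 := fun h =>
      h0 (Int.eq_zero_of_abs_lt_dvd ((hζ.zpow_eq_one_iff_dvd m).mp h) hm)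
    have hpow : (ζ ^ m) ^ p = 1 := by
      rw [← zpow_natCast, ← zpow_mul, mul_comm, zpow_mul, hζ.zpow_eq_one, one_zpow]
    rw [geom_sum_eq hne, hpow, sub_self, zero_div, mul_zero]

theorem sum_sinRatio_sq_add_pi_div (p : ℕ) (z : ℂ) :
    ∑ k ∈ range p, sinRatio p (z + k * π / p) ^ 2 = p ^ 2 := by
  have hdiag : ∀ j ∈ range p,
      ∑ l ∈ range p, (if (j + l + 1 - p : ℤ) = 0 then (p : ℂ) else 0) = p := fun j hj => by
    rw [mem_range] at hj
    simp_rw [show ∀ l : ℕ, ((j + l + 1 - p : ℤ) = 0 ↔ p - 1 - j = l) by omega]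
    rw [sum_ite_eq, if_pos (mem_range.mpr (by omega))]
  simp only [sinRatio_sq]
  calc ∑ k ∈ range p, ∑ j ∈ range p, ∑ l ∈ range p,
        cexp (2 * ((j + l + 1 - p : ℤ) * (z + k * π / p)) * I)
      = ∑ j ∈ range p, ∑ l ∈ range p, ∑ k ∈ range p,
        cexp (2 * ((j + l + 1 - p : ℤ) * (z + k * π / p)) * I) := by
        rw [sum_comm]
        exact sum_congr rfl fun j _ => sum_comm
    _ = ∑ j ∈ range p, ∑ l ∈ range p, (if (j + l + 1 - p : ℤ) = 0 then (p : ℂ) else 0) := by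
        refine sum_congr rfl fun j hj => sum_congr rfl fun l hl => ?_
        rw [mem_range] at hj hl
        exact sum_exp_int_mul_add_pi_div p _ (abs_lt.mpr ⟨by omega, by omega⟩) z
    _ = p ^ 2 := by
        rw [sum_congr rfl hdiag, sum_const, card_range, nsmul_eq_mul, sq]

theorem ofReal_hphi (p : ℕ) (hp : p ≠ 0) (t : ℝ) :
    (hphi p t : ℂ) = sinRatio p (t / 2) ^ 2 / p ^ 2 := by
  have hp' : (p : ℂ) ≠ 0 := Nat.cast_ne_zero.mpr hp
  rw [hphi]
  split_ifs with h
  · obtain ⟨n, hn⟩ := Real.sin_eq_zero_iff.mp h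
    have ht : (t / 2 : ℂ) = n * π := by exact_mod_cast hn.symm
    rw [Complex.ofReal_one, ht, sinRatio_sq_int_mul_pi, div_self (pow_ne_zero 2 hp')]
  · have hs : Complex.sin (t / 2) ≠ 0 := by exact_mod_cast h
    push_cast
    rw [show (p * t / 2 : ℂ) = p * (t / 2) by ring, sin_nat_mul_eq_sin_mul_sinRatio]
    field_simp

theorem sin_sq_add_nat_mul_pi (x : ℝ) (n : ℕ) : Real.sin (x + n * π) ^ 2 = Real.sin x ^ 2 := by
  rw [Real.sin_add_nat_mul_pi, mul_pow, ← pow_mul, pow_mul', neg_one_sq, one_pow, one_mul]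

theorem stmt_17_general (p : ℕ) (hp0 : 0 < p) :
    (∀ t : ℝ, ∑ k ∈ Finset.range p, hphi p (t + 2 * Real.pi * k / p) = 1) ∧
    (∀ t : ℝ, (∀ k ∈ Finset.range p, Real.sin ((t + 2 * Real.pi * k / p) / 2) ≠ 0) →
      ((p : ℝ) ^ 2)⁻¹ * ∑ k ∈ Finset.range p,
          Real.sin (p * t / 2) ^ 2 / Real.sin ((t + 2 * Real.pi * k / p) / 2) ^ 2 = 1) := by
  have hp : (p : ℝ) ≠ 0 := Nat.cast_ne_zero.mpr hp0.ne'
  have hsum (t : ℝ) : ∑ k ∈ range p, hphi p (t + 2 * π * k / p) = 1 := by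
    apply Complex.ofReal_injective
    have hshift (k : ℕ) : ((t + 2 * π * k / p) / 2 : ℂ) = t / 2 + k * π / p := by ring
    push_cast [ofReal_hphi p hp0.ne', hshift]
    rw [← sum_div, sum_sinRatio_sq_add_pi_div, div_self (pow_ne_zero 2 (by exact_mod_cast hp))]
  refine ⟨hsum, fun t ht => ?_⟩
  have hterm : ∀ k ∈ range p, Real.sin (p * t / 2) ^ 2 / Real.sin ((t + 2 * π * k / p) / 2) ^ 2
      = p ^ 2 * hphi p (t + 2 * π * k / p) := fun k hk => by
    rw [hphi, if_neg (ht k hk), ← sin_sq_add_nat_mul_pi (p * t / 2) k]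
    field_simp
  rw [sum_congr rfl hterm, ← mul_sum, hsum, mul_one, inv_mul_cancel₀ (pow_ne_zero 2 hp)]

theorem stmt_17 (p : ℕ) (hp : Odd p) (hp0 : 0 < p) :
    (∀ t : ℝ, ∑ k ∈ Finset.range p, hphi p (t + 2 * Real.pi * k / p) = 1) ∧
    (∀ t : ℝ, (∀ k ∈ Finset.range p, Real.sin ((t + 2 * Real.pi * k / p) / 2) ≠ 0) →
      ((p : ℝ) ^ 2)⁻¹ * ∑ k ∈ Finset.range p,
          Real.sin (p * t / 2) ^ 2 / Real.sin ((t + 2 * Real.pi * k / p) / 2) ^ 2 = 1) :=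
  stmt_17_general p hp0
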